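/- arXiv:2211.15033 — 3 statements merged into one kernel-verified Lean document; each statement's English description precedes it below -/
import Mathlib

section
/- Correlation Bound (Lemma 1). Let A and A' be n×n complex Hermitian matrices with A² = I, A'² = I and A·A' + A'·A = 0, and let B be an m×m complex Hermitian matrix with B² = I. Let ρ be an (nm)×(nm) positive semidefinite complex matrix with trace 1. Then (Re tr(ρ·(A ⊗ B)))² + (Re tr(ρ·(A' ⊗ B)))² ≤ 1. -/
/-!
For real `a, b`, anticommutation makes `C = a A + b A'` square to `(a² + b²) 1`, so `M = C ⊗ B` is a
Hermitian matrix with `M² = (a² + b²) 1`. In any state `⟨M⟩² ≤ ⟨M²⟩`, as `⟨(M - ⟨M⟩)²⟩ ≥ 0`.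
Taking `a = ⟨A ⊗ B⟩` and `b = ⟨A' ⊗ B⟩` gives `⟨M⟩ = a² + b²`, hence `(a² + b²)² ≤ a² + b²`.
-/
open Matrix Kronecker
open scoped ComplexOrder

theorem Matrix.IsHermitian.kronecker {R l m : Type*} [CommSemiring R] [StarRing R]
    {x : Matrix l l R} {y : Matrix m m R} (hx : x.IsHermitian) (hy : y.IsHermitian) :
    (x ⊗ₖ y).IsHermitian := by
  rw [IsHermitian, conjTranspose_kronecker, hx.eq, hy.eq]

theorem smul_add_smul_mul_self_of_anticommute {S R : Type*} [CommRing S] [Ring R] [Algebra S R]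
    {x y : R} (hx : x * x = 1) (hy : y * y = 1) (hxy : x * y + y * x = 0) (a b : S) :
    (a • x + b • y) * (a • x + b • y) = (a ^ 2 + b ^ 2) • (1 : R) := by
  calc (a • x + b • y) * (a • x + b • y)
      = (a * a) • (x * x) + (a * b) • (x * y + y * x) + (b * b) • (y * y) := by
        simp only [add_mul, mul_add, smul_mul_smul_comm, smul_add]
        rw [mul_comm b a]
        abel
    _ = (a ^ 2 + b ^ 2) • 1 := by
        rw [hx, hy, hxy, smul_zero, add_zero, ← add_smul, sq, sq]

section State

variable {𝕜 k : Type*} [RCLike 𝕜] [Fintype k] [DecidableEq k] {ρ M : Matrix k k 𝕜}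

theorem Matrix.PosSemidef.sq_re_trace_mul_le (hρ : ρ.PosSemidef) (hρtr : ρ.trace = 1)
    (hM : M.IsHermitian) :
    RCLike.re (ρ * M).trace ^ 2 ≤ RCLike.re (ρ * (M * M)).trace := by
  set x := RCLike.re (ρ * M).trace
  set N := M - x • 1
  have hN : Nᴴ = N := by simp [N, conjTranspose_sub, hM.eq]
  have hpos : 0 ≤ RCLike.re (ρ * (N * N)).trace := by
    have := (hρ.conjTranspose_mul_mul_same N).trace_nonneg
    rw [hN, trace_mul_cycle, trace_mul_comm] at this
    exact (RCLike.nonneg_iff.mp this).1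
  have hexp : ρ * (N * N) = ρ * (M * M) - (2 * x) • (ρ * M) + (x ^ 2) • ρ := by
    simp only [N, sub_mul, mul_sub, smul_mul_assoc, mul_smul_comm, one_mul, mul_one, smul_sub,
      smul_smul]
    module
  rw [hexp, trace_add, trace_sub, trace_smul, trace_smul, hρtr, map_add, map_sub, RCLike.smul_re,
    RCLike.smul_re, RCLike.one_re] at hpos
  nlinarith

theorem Matrix.PosSemidef.sq_re_trace_mul_le_of_mul_self (hρ : ρ.PosSemidef)
    (hρtr : ρ.trace = 1) (hM : M.IsHermitian) {t : ℝ} (hMt : M * M = t • 1) :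
    RCLike.re (ρ * M).trace ^ 2 ≤ t := by
  simpa [hMt, trace_smul, hρtr, RCLike.smul_re] using hρ.sq_re_trace_mul_le hρtr hM

end State

/-- **Correlation Bound (Lemma 1).** For anticommuting Hermitian involutions `A, A'`
on Alice's system, a Hermitian involution `B` on Bob's system, and any state `ρ`,
the squared correlators satisfy `⟨A⊗B⟩² + ⟨A'⊗B⟩² ≤ 1`. -/
theorem correlation_bound
    (n m : ℕ)
    (A A' : Matrix (Fin n) (Fin n) ℂ)
    (hA : A.IsHermitian) (hA' : A'.IsHermitian)
    (hA2 : A * A = 1) (hA'2 : A' * A' = 1)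
    (hanti : A * A' + A' * A = 0)
    (B : Matrix (Fin m) (Fin m) ℂ)
    (hB : B.IsHermitian) (hB2 : B * B = 1)
    (ρ : Matrix (Fin n × Fin m) (Fin n × Fin m) ℂ)
    (hρ : ρ.PosSemidef) (hρtr : ρ.trace = 1) :
    ((ρ * (A ⊗ₖ B)).trace).re ^ 2 + ((ρ * (A' ⊗ₖ B)).trace).re ^ 2 ≤ 1 := by
  set a := ((ρ * (A ⊗ₖ B)).trace).re
  set b := ((ρ * (A' ⊗ₖ B)).trace).re
  set M := (a • A + b • A') ⊗ₖ B
  have hM : M.IsHermitian :=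
    ((hA.smul (IsSelfAdjoint.all a)).add (hA'.smul (IsSelfAdjoint.all b))).kronecker hB
  have hM2 : M * M = (a ^ 2 + b ^ 2) • 1 := by
    rw [← mul_kronecker_mul, smul_add_smul_mul_self_of_anticommute hA2 hA'2 hanti, hB2,
      smul_kronecker, one_kronecker_one]
  have hcorr : ((ρ * M).trace).re = a ^ 2 + b ^ 2 := by
    simp [M, add_kronecker, smul_kronecker, mul_add, trace_add, trace_smul, sq, a, b]
  have hsq := hρ.sq_re_trace_mul_le_of_mul_self hρtr hM hM2
  rw [RCLike.re_to_complex, hcorr] at hsq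
  nlinarith [sq_nonneg a, sq_nonneg b]
end

section
/- Let p : {0,1} × {0,1} → ℝ with p(i,j) > 0 for all i,j and p(0,0)+p(0,1)+p(1,0)+p(1,1) = 1, and set δ = p(0,0)·p(1,0) − p(0,1)·p(1,1). Then 1 − δ/p(0,0) > 0, 1 − δ/p(1,0) > 0, 1 + δ/p(0,1) > 0, 1 + δ/p(1,1) > 0, and h(p(0,1)+p(1,0)) + h(p(0,0)+p(0,1)) + Σ_{i,j} p(i,j)·log p(i,j) = −p(0,0)·log(1 − δ/p(0,0)) − p(1,0)·log(1 − δ/p(1,0)) − p(0,1)·log(1 + δ/p(0,1)) − p(1,1)·log(1 + δ/p(1,1)), where h(x) = −x·log x − (1−x)·log(1−x) and log is the natural logarithm. -/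
/-!
Write `r = p₀₀ + p₀₁` for the law of the first bit and `q = p₀₁ + p₁₀` for the law of the
parity of the two bits. Since the four cells sum to one, each cell satisfies
`pᵢⱼ ∓ δ = P(A = i) · P(A ⊕ B = i ⊕ j)`, so `1 ∓ δ/pᵢⱼ` is the ratio of the product of these
two marginals to `pᵢⱼ`. The right-hand side is therefore the relative entropy of `p` with
respect to the product of the laws of `A` and `A ⊕ B`, which expands into `h(r) + h(q) − H(p)`.
-/

open Real

lemma pos_and_log_eq_of_mul_eq {a m n x : ℝ} (ha : 0 < a) (hm : 0 < m) (hn : 0 < n)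
    (h : a * x = m * n) : 0 < x ∧ log x = log m + log n - log a := by
  have hx : x = m * n / a := by rw [← h, mul_div_cancel_left₀ x ha.ne']
  subst hx
  exact ⟨by positivity, by rw [log_div (by positivity) ha.ne', log_mul hm.ne' hn.ne']⟩

/-- The identity expressing `Δ = h(Q) − H(B₁|A₀)` in terms of
`δ = p₀₀p₁₀ − p₀₁p₁₁`: for a strictly positive two-bit distribution `p`,
all four arguments `1 ∓ δ/pᵢⱼ` are positive and
`h(p₀₁+p₁₀) + h(p₀₀+p₀₁) + Σ pᵢⱼ log pᵢⱼ
  = −p₀₀ log(1−δ/p₀₀) − p₁₀ log(1−δ/p₁₀) − p₀₁ log(1+δ/p₀₁) − p₁₁ log(1+δ/p₁₁)`. -/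
theorem delta_identity
    (p : Fin 2 → Fin 2 → ℝ)
    (hpos : ∀ i j, 0 < p i j)
    (hsum : p 0 0 + p 0 1 + p 1 0 + p 1 1 = 1) :
    let δ : ℝ := p 0 0 * p 1 0 - p 0 1 * p 1 1
    let h : ℝ → ℝ := fun x => -x * Real.log x - (1 - x) * Real.log (1 - x)
    0 < 1 - δ / p 0 0 ∧ 0 < 1 - δ / p 1 0 ∧ 0 < 1 + δ / p 0 1 ∧ 0 < 1 + δ / p 1 1 ∧
    h (p 0 1 + p 1 0) + h (p 0 0 + p 0 1)
        + (p 0 0 * Real.log (p 0 0) + p 0 1 * Real.log (p 0 1)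
          + p 1 0 * Real.log (p 1 0) + p 1 1 * Real.log (p 1 1))
      = -(p 0 0 * Real.log (1 - δ / p 0 0)) - p 1 0 * Real.log (1 - δ / p 1 0)
        - p 0 1 * Real.log (1 + δ / p 0 1) - p 1 1 * Real.log (1 + δ / p 1 1) := by
  intro δ h
  have h00 := hpos 0 0
  have h01 := hpos 0 1
  have h10 := hpos 1 0
  have h11 := hpos 1 1
  have hr₀ : 1 - (p 0 0 + p 0 1) = p 1 0 + p 1 1 := by linarith
  have hq₀ : 1 - (p 0 1 + p 1 0) = p 0 0 + p 1 1 := by linarith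
  obtain ⟨pos00, log00⟩ := pos_and_log_eq_of_mul_eq (x := 1 - δ / p 0 0) h00
    (add_pos h00 h01) (add_pos h00 h11) (by field_simp; linear_combination -p 0 0 * hsum)
  obtain ⟨pos10, log10⟩ := pos_and_log_eq_of_mul_eq (x := 1 - δ / p 1 0) h10
    (add_pos h10 h11) (add_pos h01 h10) (by field_simp; linear_combination -p 1 0 * hsum)
  obtain ⟨pos01, log01⟩ := pos_and_log_eq_of_mul_eq (x := 1 + δ / p 0 1) h01
    (add_pos h00 h01) (add_pos h01 h10) (by field_simp; linear_combination -p 0 1 * hsum)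
  obtain ⟨pos11, log11⟩ := pos_and_log_eq_of_mul_eq (x := 1 + δ / p 1 1) h11
    (add_pos h10 h11) (add_pos h00 h11) (by field_simp; linear_combination -p 1 1 * hsum)
  refine ⟨pos00, pos10, pos01, pos11, ?_⟩
  simp only [h, hr₀, hq₀, log00, log10, log01, log11]
  ring
end

section
/- Let p : {0,1} × {0,1} → ℝ with p(i,j) > 0 for all i,j and total sum 1, and suppose h(p(0,1)+p(1,0)) + h(p(0,0)+p(0,1)) + Σ_{i,j} p(i,j)·log p(i,j) = 0, where h(x) = −x·log x − (1−x)·log(1−x). Then p(0,0)·p(1,0) = p(0,1)·p(1,1). -/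
/-!
Write `A, B` for the two bits and `X = A + B` (mod 2). Since `1 - (p₀₁ + p₁₀) = p₀₀ + p₁₁` and
`1 - (p₀₀ + p₀₁) = p₁₀ + p₁₁`, `Δ` is the mutual information of `A` and `X`, i.e. the
Kullback–Leibler divergence of `p` from the law that makes `A` and `X` independent with the same
marginals. Equality in Gibbs' inequality forces `p` to be that law, and then `p₀₀ p₁₀` and
`p₀₁ p₁₁` both equal `P(A=0) P(A=1) P(X=0) P(X=1)`.
-/

open Real Finset InformationTheory

lemma mul_klFun_div {p q : ℝ} (hq : q ≠ 0) :
    q * klFun (p / q) = p * log (p / q) + q - p := by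
  rw [klFun_apply]
  field_simp

theorem eq_of_sum_mul_log_div_eq_zero {ι : Type*} {s : Finset ι} {p q : ι → ℝ}
    (hp : ∀ i ∈ s, 0 ≤ p i) (hq : ∀ i ∈ s, 0 < q i) (hsum : ∑ i ∈ s, p i = ∑ i ∈ s, q i)
    (h : ∑ i ∈ s, p i * log (p i / q i) = 0) : ∀ i ∈ s, p i = q i := by
  have hkl : ∑ i ∈ s, q i * klFun (p i / q i) = 0 := by
    rw [sum_congr rfl fun i hi => mul_klFun_div (hq i hi).ne', sum_sub_distrib, sum_add_distrib,
      h, hsum]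
    ring
  have hnonneg : ∀ i ∈ s, 0 ≤ q i * klFun (p i / q i) := fun i hi =>
    mul_nonneg (hq i hi).le (klFun_nonneg (div_nonneg (hp i hi) (hq i hi).le))
  intro i hi
  have hzero := (sum_eq_zero_iff_of_nonneg hnonneg).1 hkl i hi
  rw [mul_eq_zero, klFun_eq_zero_iff (div_nonneg (hp i hi) (hq i hi).le),
    div_eq_one_iff_eq (hq i hi).ne'] at hzero
  exact hzero.resolve_left (hq i hi).ne'

lemma log_div_mul {x y z : ℝ} (hx : 0 < x) (hy : 0 < y) (hz : 0 < z) :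
    log (x / (y * z)) = log x - log y - log z := by
  rw [log_div hx.ne' (mul_pos hy hz).ne', log_mul hy.ne' hz.ne']
  ring

-- `p 0 k + p 1 (k + 1)` is the probability that `A + B = k`.
def xorProductLaw (p : Fin 2 → Fin 2 → ℝ) (x : Fin 2 × Fin 2) : ℝ :=
  (p x.1 0 + p x.1 1) * (p 0 (x.1 + x.2) + p 1 (x.1 + x.2 + 1))

section xorProductLaw

variable {p : Fin 2 → Fin 2 → ℝ}

lemma xorProductLaw_pos (hpos : ∀ i j, 0 < p i j) (x : Fin 2 × Fin 2) : 0 < xorProductLaw p x :=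
  mul_pos (add_pos (hpos _ _) (hpos _ _)) (add_pos (hpos _ _) (hpos _ _))

variable (p) in
lemma sum_xorProductLaw :
    ∑ x, xorProductLaw p x = (p 0 0 + p 0 1 + p 1 0 + p 1 1) ^ 2 := by
  simp only [xorProductLaw, Fintype.sum_prod_type, Fin.sum_univ_two, add_zero, zero_add,
    Fin.reduceAdd]
  ring

lemma sum_mul_log_div_xorProductLaw (hpos : ∀ i j, 0 < p i j) :
    ∑ x : Fin 2 × Fin 2, p x.1 x.2 * log (p x.1 x.2 / xorProductLaw p x)
      = p 0 0 * log (p 0 0) + p 0 1 * log (p 0 1) + p 1 0 * log (p 1 0) + p 1 1 * log (p 1 1)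
        - (p 0 0 + p 0 1) * log (p 0 0 + p 0 1) - (p 1 0 + p 1 1) * log (p 1 0 + p 1 1)
        - (p 0 0 + p 1 1) * log (p 0 0 + p 1 1) - (p 0 1 + p 1 0) * log (p 0 1 + p 1 0) := by
  have hlog (x : Fin 2 × Fin 2) : log (p x.1 x.2 / xorProductLaw p x)
      = log (p x.1 x.2) - log (p x.1 0 + p x.1 1)
        - log (p 0 (x.1 + x.2) + p 1 (x.1 + x.2 + 1)) :=
    log_div_mul (hpos _ _) (add_pos (hpos _ _) (hpos _ _)) (add_pos (hpos _ _) (hpos _ _))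
  simp only [hlog, Fintype.sum_prod_type, Fin.sum_univ_two, add_zero, zero_add, Fin.reduceAdd]
  ring

variable (p) in
lemma xorProductLaw_mul_xorProductLaw :
    xorProductLaw p (0, 0) * xorProductLaw p (1, 0)
      = xorProductLaw p (0, 1) * xorProductLaw p (1, 1) := by
  simp only [xorProductLaw, add_zero, zero_add, Fin.reduceAdd]
  ring

end xorProductLaw

/-- Equality condition for `h(Q) ≥ H(B₁|A₀)`: if the difference
`Δ = h(p₀₁+p₁₀) + h(p₀₀+p₀₁) + Σ pᵢⱼ log pᵢⱼ` vanishes for a strictly positive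
two-bit distribution `p`, then `p₀₀ p₁₀ = p₀₁ p₁₁`. -/
theorem delta_eq_zero_imp
    (p : Fin 2 → Fin 2 → ℝ)
    (hpos : ∀ i j, 0 < p i j)
    (hsum : p 0 0 + p 0 1 + p 1 0 + p 1 1 = 1)
    (heq : (fun x : ℝ => -x * Real.log x - (1 - x) * Real.log (1 - x)) (p 0 1 + p 1 0)
        + (fun x : ℝ => -x * Real.log x - (1 - x) * Real.log (1 - x)) (p 0 0 + p 0 1)
        + (p 0 0 * Real.log (p 0 0) + p 0 1 * Real.log (p 0 1)
          + p 1 0 * Real.log (p 1 0) + p 1 1 * Real.log (p 1 1)) = 0) :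
    p 0 0 * p 1 0 = p 0 1 * p 1 1 := by
  have hp_sum : ∑ x : Fin 2 × Fin 2, p x.1 x.2 = 1 := by
    simp only [Fintype.sum_prod_type, Fin.sum_univ_two]
    linarith
  have hq_sum : ∑ x, xorProductLaw p x = 1 := by rw [sum_xorProductLaw, hsum, one_pow]
  have hkl : ∑ x : Fin 2 × Fin 2, p x.1 x.2 * log (p x.1 x.2 / xorProductLaw p x) = 0 := by
    beta_reduce at heq
    rw [show 1 - (p 0 1 + p 1 0) = p 0 0 + p 1 1 by linarith,
      show 1 - (p 0 0 + p 0 1) = p 1 0 + p 1 1 by linarith] at heq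
    rw [sum_mul_log_div_xorProductLaw hpos]
    linear_combination heq
  have hpq (i j : Fin 2) : p i j = xorProductLaw p (i, j) :=
    eq_of_sum_mul_log_div_eq_zero (fun x _ => (hpos x.1 x.2).le)
      (fun x _ => xorProductLaw_pos hpos x) (hp_sum.trans hq_sum.symm) hkl (i, j) (mem_univ _)
  rw [hpq 0 0, hpq 1 0, hpq 0 1, hpq 1 1]
  exact xorProductLaw_mul_xorProductLaw p
end
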